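/- arXiv:2209.08775 — 3 statements merged into one kernel-verified Lean document; each statement's English description precedes it below -/
import Mathlib

section
/- Let R₁ and R₂ be bounded normal operators on a Hilbert space H. Then the Hausdorff distance between their spectra satisfies d_H(σ(R₁), σ(R₂)) ≤ ‖R₁ − R₂‖, where ‖·‖ is the operator norm. -/
/-! If `k ∈ σ(a)` had distance `d > ‖a - b‖` from `σ(b)`, then, `b` being normal, the continuous
functional calculus gives `‖(k - b)⁻¹‖ ≤ 1 / d`, so `k - a = (k - b) (1 - (k - b)⁻¹ (a - b))` would
be invertible by a Neumann series. Exchanging `a` and `b` bounds the other half of the Hausdorff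
distance. -/

open Metric

theorem spectrum.notMem_of_norm_resolvent_mul_lt {𝕜 A : Type*} [NormedField 𝕜] [NormedRing A]
    [NormedAlgebra 𝕜 A] [HasSummableGeomSeries A] {a b : A} {k : 𝕜} (hk : k ∉ spectrum 𝕜 b)
    (h : ‖resolvent b k‖ * ‖a - b‖ < 1) : k ∉ spectrum 𝕜 a := by
  obtain ⟨u, hu⟩ := spectrum.notMem_iff.mp hk
  rw [resolvent, ← hu, Ring.inverse_unit] at h
  let v := Units.oneSub (↑u⁻¹ * (a - b)) ((norm_mul_le _ _).trans_lt h)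
  rw [spectrum.notMem_iff]
  convert (u * v).isUnit using 1
  rw [Units.val_mul, Units.val_oneSub, mul_sub, mul_one, Units.mul_inv_cancel_left, hu]
  abel

section CStarAlgebra

variable {A : Type*} [CStarAlgebra A]

theorem IsStarNormal.norm_resolvent_le_inv_infDist {b : A} [IsStarNormal b] {k : ℂ}
    (hk : k ∉ spectrum ℂ b) : ‖resolvent b k‖ ≤ (infDist k (spectrum ℂ b))⁻¹ := by
  have hsub : cfc (fun z ↦ k - z) b = algebraMap ℂ A k - b := by
    rw [cfc_sub .., cfc_const k b, cfc_id' ℂ b]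
  have hne : ∀ z ∈ spectrum ℂ b, k - z ≠ 0 := fun z hz ↦
    sub_ne_zero.mpr (ne_of_mem_of_not_mem hz hk).symm
  rw [resolvent, ← hsub, ← cfc_inv _ _ hne]
  refine norm_cfc_le (inv_nonneg.mpr infDist_nonneg) fun z hz ↦ ?_
  have hpos : 0 < infDist k (spectrum ℂ b) :=
    ((spectrum.isClosed b).notMem_iff_infDist_pos ⟨z, hz⟩).mp hk
  rw [norm_inv, ← dist_eq_norm]
  exact inv_anti₀ hpos (infDist_le_dist_of_mem hz)

theorem IsStarNormal.infDist_spectrum_le_norm_sub {a b : A} [IsStarNormal b] {k : ℂ}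
    (hk : k ∈ spectrum ℂ a) : infDist k (spectrum ℂ b) ≤ ‖a - b‖ := by
  by_contra! h
  have hpos : 0 < infDist k (spectrum ℂ b) := (norm_nonneg _).trans_lt h
  have hkb : k ∉ spectrum ℂ b := fun hkb ↦ hpos.ne' (infDist_zero_of_mem hkb)
  refine spectrum.notMem_of_norm_resolvent_mul_lt hkb ?_ hk
  calc ‖resolvent b k‖ * ‖a - b‖ ≤ (infDist k (spectrum ℂ b))⁻¹ * ‖a - b‖ := by
        gcongr; exact norm_resolvent_le_inv_infDist hkb
    _ < (infDist k (spectrum ℂ b))⁻¹ * infDist k (spectrum ℂ b) := by gcongr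
    _ = 1 := inv_mul_cancel₀ hpos.ne'

theorem IsStarNormal.hausdorffDist_spectrum_le_norm_sub {a b : A} [IsStarNormal a]
    [IsStarNormal b] : hausdorffDist (spectrum ℂ a) (spectrum ℂ b) ≤ ‖a - b‖ :=
  hausdorffDist_le_of_infDist (norm_nonneg _) (fun _ ↦ infDist_spectrum_le_norm_sub)
    fun _ hk ↦ norm_sub_rev a b ▸ infDist_spectrum_le_norm_sub hk

end CStarAlgebra

/-- For bounded normal operators `R₁, R₂` on a complex Hilbert space `H`,
the Hausdorff distance between their spectra is bounded by the operator norm of their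
difference: `d_H(σ(R₁), σ(R₂)) ≤ ‖R₁ − R₂‖`. -/
theorem hausdorffDist_spectrum_le_norm_sub
    {H : Type*} [NormedAddCommGroup H] [InnerProductSpace ℂ H] [CompleteSpace H]
    (R₁ R₂ : H →L[ℂ] H) (h₁ : IsStarNormal R₁) (h₂ : IsStarNormal R₂) :
    Metric.hausdorffDist (spectrum ℂ R₁) (spectrum ℂ R₂) ≤ ‖R₁ - R₂‖ :=
  IsStarNormal.hausdorffDist_spectrum_le_norm_sub
end

section
/- Let H be a Hilbert space, a_ε and a densely defined closed nonnegative symmetric sesquilinear forms with associated self-adjoint operators A_ε and A, and let H¹_ε = dom(a_ε), H¹ = dom(a) with graph norms ‖u‖²_{H¹_ε} = a_ε[u,u] + ‖u‖², ‖f‖²_{H¹} = a[f,f] + ‖f‖², and H² = dom(A) with norm ‖f‖_{H²} = ‖(A+I)f‖. Suppose J_ε : H¹ → H¹_ε and J'_ε : H¹_ε → H¹ are linear operators satisfying: (i) ‖J_ε f − f‖_H ≤ δ_ε ‖f‖_{H¹} for all f ∈ H¹; (ii) ‖J'_ε u − u‖_H ≤ δ_ε ‖u‖_{H¹_ε} for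 all u ∈ H¹_ε; (iii) |a_ε[J_ε f, u] − a[f, J'_ε u]| ≤ δ_ε ‖f‖_{H²} ‖u‖_{H¹_ε} for all f ∈ H², u ∈ H¹_ε. Then there is an absolute constant C > 0 such that ‖(A_ε + I)⁻¹ f − J_ε (A + I)⁻¹ f‖_{H¹_ε} ≤ C δ_ε ‖f‖_H for all f ∈ H. -/
/-!
Put `u = Rε f - Jε (R f)`. Testing the weak formulation of `Rε f` against `u`, and that of
`R f` against `J' u ∈ D`, expresses `aε[u, u] + ‖u‖²` as a sum of four terms, each of which
is at most `δ ‖f‖ ‖u‖_{H¹_ε}` by (i), (ii), (iii) and the energy estimate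
`‖R f‖_{H¹} ≤ ‖f‖`. Hence `‖u‖²_{H¹_ε} ≤ 4 δ ‖f‖ ‖u‖_{H¹_ε}`.
-/

open scoped InnerProductSpace
open RCLike

variable {𝕜 H : Type*} [RCLike 𝕜] [NormedAddCommGroup H] [InnerProductSpace 𝕜 H]

noncomputable def formGraphNorm (b : H →ₗ⋆[𝕜] H →ₗ[𝕜] 𝕜) (u : H) : ℝ :=
  √(re (b u u) + ‖u‖ ^ 2)

section formGraphNorm

variable {b : H →ₗ⋆[𝕜] H →ₗ[𝕜] 𝕜} {u : H}

theorem sq_formGraphNorm (hb : 0 ≤ re (b u u)) :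
    formGraphNorm b u ^ 2 = re (b u u + ⟪u, u⟫_𝕜) := by
  rw [formGraphNorm, Real.sq_sqrt (by positivity), map_add, inner_self_eq_norm_sq]

theorem norm_le_formGraphNorm (hb : 0 ≤ re (b u u)) : ‖u‖ ≤ formGraphNorm b u :=
  Real.le_sqrt_of_sq_le (le_add_of_nonneg_left hb)

theorem formGraphNorm_le_of_re_le_mul {c : ℝ} (hb : 0 ≤ re (b u u)) (hc : 0 ≤ c)
    (h : re (b u u + ⟪u, u⟫_𝕜) ≤ c * formGraphNorm b u) : formGraphNorm b u ≤ c := by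
  have hN : 0 ≤ formGraphNorm b u := Real.sqrt_nonneg _
  rw [← sq_formGraphNorm hb] at h
  nlinarith

/-- The energy estimate `‖(A + I)⁻¹ f‖_{H¹} ≤ ‖f‖`, for `x = (A + I)⁻¹ f`. -/
theorem formGraphNorm_le_of_form_add_inner_eq {x f : H} (hb : 0 ≤ re (b x x))
    (hx : b x x + ⟪x, x⟫_𝕜 = ⟪f, x⟫_𝕜) : formGraphNorm b x ≤ ‖f‖ := by
  refine formGraphNorm_le_of_re_le_mul hb (norm_nonneg f) ?_
  rw [hx]
  exact (re_inner_le_norm f x).trans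
    (mul_le_mul_of_nonneg_left (norm_le_formGraphNorm hb) (norm_nonneg f))

end formGraphNorm

theorem norm_inner_le_mul_of_le {x y : H} {α β : ℝ} (hx : ‖x‖ ≤ α) (hy : ‖y‖ ≤ β) :
    ‖⟪x, y⟫_𝕜‖ ≤ α * β :=
  (norm_inner_le_norm x y).trans
    (mul_le_mul hx hy (norm_nonneg y) ((norm_nonneg x).trans hx))

theorem form_sub_add_inner_sub_eq {bε b : H →ₗ⋆[𝕜] H →ₗ[𝕜] 𝕜} {f x y z u w : H}
    (hx : bε x u + ⟪x, u⟫_𝕜 = ⟪f, u⟫_𝕜) (hy : b y w + ⟪y, w⟫_𝕜 = ⟪f, w⟫_𝕜) :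
    bε (x - z) u + ⟪x - z, u⟫_𝕜 =
      ⟪f, u - w⟫_𝕜 + ⟪y, w - u⟫_𝕜 + ⟪y - z, u⟫_𝕜 - (bε z u - b y w) := by
  simp only [map_sub, LinearMap.sub_apply, inner_sub_left, inner_sub_right]
  linear_combination hx - hy

theorem formGraphNorm_resolvent_sub_le {bε b : H →ₗ⋆[𝕜] H →ₗ[𝕜] 𝕜} {Dε D : Submodule 𝕜 H}
    {Rε R Jε J' : H →ₗ[𝕜] H} {δ : ℝ} (hδ : 0 ≤ δ)
    (hbε : ∀ u ∈ Dε, 0 ≤ re (bε u u)) (hb : ∀ f ∈ D, 0 ≤ re (b f f))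
    (hRε : ∀ f : H, Rε f ∈ Dε ∧ ∀ v ∈ Dε, bε (Rε f) v + ⟪Rε f, v⟫_𝕜 = ⟪f, v⟫_𝕜)
    (hR : ∀ f : H, R f ∈ D ∧ ∀ v ∈ D, b (R f) v + ⟪R f, v⟫_𝕜 = ⟪f, v⟫_𝕜)
    (hJε : ∀ f ∈ D, Jε f ∈ Dε) (hJ' : ∀ u ∈ Dε, J' u ∈ D)
    (hi : ∀ f ∈ D, ‖Jε f - f‖ ≤ δ * formGraphNorm b f)
    (hii : ∀ u ∈ Dε, ‖J' u - u‖ ≤ δ * formGraphNorm bε u)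
    (hiii : ∀ g : H, ∀ u ∈ Dε,
      ‖bε (Jε (R g)) u - b (R g) (J' u)‖ ≤ δ * ‖g‖ * formGraphNorm bε u) (f : H) :
    formGraphNorm bε (Rε f - Jε (R f)) ≤ 4 * δ * ‖f‖ := by
  set u := Rε f - Jε (R f)
  set N := formGraphNorm bε u
  have hRf : R f ∈ D := (hR f).1
  have hu : u ∈ Dε := Dε.sub_mem (hRε f).1 (hJε _ hRf)
  have hRf_le : formGraphNorm b (R f) ≤ ‖f‖ :=
    formGraphNorm_le_of_form_add_inner_eq (hb _ hRf) ((hR f).2 _ hRf)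
  have hJRf : ‖R f - Jε (R f)‖ ≤ δ * ‖f‖ := by
    rw [norm_sub_rev]
    exact (hi _ hRf).trans (mul_le_mul_of_nonneg_left hRf_le hδ)
  have h₁ : ‖⟪f, u - J' u⟫_𝕜‖ ≤ ‖f‖ * (δ * N) :=
    norm_inner_le_mul_of_le le_rfl (by rw [norm_sub_rev]; exact hii u hu)
  have h₂ : ‖⟪R f, J' u - u⟫_𝕜‖ ≤ ‖f‖ * (δ * N) :=
    norm_inner_le_mul_of_le ((norm_le_formGraphNorm (hb _ hRf)).trans hRf_le) (hii u hu)
  have h₃ : ‖⟪R f - Jε (R f), u⟫_𝕜‖ ≤ δ * ‖f‖ * N :=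
    norm_inner_le_mul_of_le hJRf (norm_le_formGraphNorm (hbε u hu))
  have h₄ := hiii f u hu
  refine formGraphNorm_le_of_re_le_mul (hbε u hu) (by positivity) ?_
  rw [form_sub_add_inner_sub_eq ((hRε f).2 u hu) ((hR f).2 _ (hJ' u hu))]
  refine (re_le_norm _).trans ((norm_sub_le _ _).trans ?_)
  grw [norm_add_le, norm_add_le]
  linarith

/-- **abstract scheme, Proposition 2.5 of [AP21].**
`H` is a Hilbert space, `aε`, `a` nonnegative hermitian sesquilinear forms with form
domains `Dε = dom(aε)`, `D = dom(a)`, and `Rε = (Aε + I)⁻¹`, `R = (A + I)⁻¹` the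
resolvents of the associated self-adjoint operators, characterized by the weak
formulations `aε[Rε f, v] + (Rε f, v) = (f, v)` for `v ∈ Dε` (and similarly for `R`).
Note `H² = dom(A) = ran(R)` with `‖R g‖_{H²} = ‖g‖`. If `Jε : H¹ → H¹_ε` and
`J'ε : H¹_ε → H¹` are linear operators satisfying (i) `‖Jε f − f‖ ≤ δ‖f‖_{H¹}`,
(ii) `‖J'ε u − u‖ ≤ δ‖u‖_{H¹_ε}`, (iii) `|aε[Jε f, u] − a[f, J'ε u]| ≤ δ‖f‖_{H²}‖u‖_{H¹_ε}`
for `f ∈ H²`, `u ∈ H¹_ε`, then `‖(Aε+I)⁻¹ f − Jε (A+I)⁻¹ f‖_{H¹_ε} ≤ C δ ‖f‖` for all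
`f ∈ H`, with an absolute constant `C > 0`. -/
theorem abstract_resolvent_comparison :
    ∃ C : ℝ, 0 < C ∧
      ∀ (H : Type) (_ : NormedAddCommGroup H), ∀ (_ : InnerProductSpace ℂ H)
        (_ : CompleteSpace H)
        (Dε D : Submodule ℂ H)
        (aε a : H →ₗ⋆[ℂ] H →ₗ[ℂ] ℂ)
        (Rε R Jε J' : H →ₗ[ℂ] H) (δ : ℝ),
        0 ≤ δ →
        (∀ u ∈ Dε, (aε u u).im = 0 ∧ 0 ≤ (aε u u).re) →
        (∀ f ∈ D, (a f f).im = 0 ∧ 0 ≤ (a f f).re) →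
        (∀ f : H, Rε f ∈ Dε ∧ ∀ v ∈ Dε, aε (Rε f) v + ⟪Rε f, v⟫_ℂ = ⟪f, v⟫_ℂ) →
        (∀ f : H, R f ∈ D ∧ ∀ v ∈ D, a (R f) v + ⟪R f, v⟫_ℂ = ⟪f, v⟫_ℂ) →
        (∀ f ∈ D, Jε f ∈ Dε) →
        (∀ u ∈ Dε, J' u ∈ D) →
        (∀ f ∈ D, ‖Jε f - f‖ ≤ δ * Real.sqrt ((a f f).re + ‖f‖ ^ 2)) →
        (∀ u ∈ Dε, ‖J' u - u‖ ≤ δ * Real.sqrt ((aε u u).re + ‖u‖ ^ 2)) →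
        (∀ g : H, ∀ u ∈ Dε,
          ‖aε (Jε (R g)) u - a (R g) (J' u)‖ ≤
            δ * ‖g‖ * Real.sqrt ((aε u u).re + ‖u‖ ^ 2)) →
        ∀ f : H,
          Real.sqrt ((aε (Rε f - Jε (R f)) (Rε f - Jε (R f))).re +
              ‖Rε f - Jε (R f)‖ ^ 2) ≤ C * δ * ‖f‖ :=
  ⟨4, four_pos, fun _ _ _ _ _ _ _ _ _ _ _ _ _ hδ haε ha hRε hR hJε hJ' hi hii hiii =>
    formGraphNorm_resolvent_sub_le (𝕜 := ℂ) hδ (fun u hu => (haε u hu).2)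
      (fun f hf => (ha f hf).2) hRε hR hJε hJ' hi hii hiii⟩
end

section
/- Let D ⊂ ℝ^n be a bounded convex domain and let D₁, D₂ ⊆ D be measurable subsets of positive Lebesgue measure. Then there exists a constant C depending only on n such that for every v ∈ H¹(D): |⟨v⟩_{D₁} − ⟨v⟩_{D₂}|² ≤ C (diam(D))^{n+2} / (vol(D₁) · vol(D₂)) · ‖∇v‖²_{L²(D)}, where ⟨v⟩_{D_i} denotes the mean value of v over D_i. -/
/-!
For `x ∈ D₁`, `y ∈ D₂` the segment from `y` to `x` lies in `D`, so by the fundamental theorem of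
calculus and Cauchy–Schwarz `|v x - v y|² ≤ (diam D)² ∫₀¹ |∇v((1-t)y + tx)|² dt`. Integrating over
`D₁ × D₂` and, for each `t`, substituting `z = (1-t)y + tx` in whichever of `y`, `x` carries a
coefficient `≥ 1/2` (Jacobian `≤ 2ⁿ`) gives `∫∫ |v x - v y|² ≤ 2ⁿ |D| (diam D)² ‖∇v‖²`. Jensen's
inequality gives `|⟨v⟩₁ - ⟨v⟩₂|² ≤ (|D₁| |D₂|)⁻¹ ∫∫ |v x - v y|²`, and `|D| ≤ |B₁| (diam D)ⁿ`.
-/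

open MeasureTheory Set Module Metric
open scoped ENNReal

section Averages

variable {α E : Type*} [MeasurableSpace α] [NormedAddCommGroup E] [NormedSpace ℝ E]

theorem sq_lintegral_le_measure_univ_mul (μ : Measure α) {g : α → ℝ≥0∞} (hg : AEMeasurable g μ) :
    (∫⁻ a, g a ∂μ) ^ 2 ≤ μ univ * ∫⁻ a, g a ^ 2 ∂μ := by
  have h := ENNReal.lintegral_mul_le_Lp_mul_Lq μ .two_two aemeasurable_const hg (f := 1)
  simp only [Pi.mul_apply, Pi.one_apply, one_mul, one_pow, lintegral_const,
    ENNReal.rpow_two] at h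
  calc (∫⁻ a, g a ∂μ) ^ 2 ≤ ((μ univ) ^ (1 / 2 : ℝ) * (∫⁻ a, g a ^ 2 ∂μ) ^ (1 / 2 : ℝ)) ^ 2 := by
        gcongr
    _ = μ univ * ∫⁻ a, g a ^ 2 ∂μ := by
        rw [mul_pow, ← ENNReal.rpow_natCast, ← ENNReal.rpow_natCast, ← ENNReal.rpow_mul,
          ← ENNReal.rpow_mul]
        norm_num

theorem enorm_average_sq_le (μ : Measure α) {f : α → E} (hf : AEStronglyMeasurable f μ) :
    ‖⨍ a, f a ∂μ‖ₑ ^ 2 ≤ (μ univ)⁻¹ * ∫⁻ a, ‖f a‖ₑ ^ 2 ∂μ := by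
  set ν := (μ univ)⁻¹ • μ
  calc ‖⨍ a, f a ∂μ‖ₑ ^ 2 ≤ (∫⁻ a, ‖f a‖ₑ ∂ν) ^ 2 := by
        rw [average_eq']; gcongr; exact enorm_integral_le_lintegral_enorm _
    _ ≤ ν univ * ∫⁻ a, ‖f a‖ₑ ^ 2 ∂ν :=
        sq_lintegral_le_measure_univ_mul ν (hf.smul_measure _).enorm
    _ ≤ 1 * ∫⁻ a, ‖f a‖ₑ ^ 2 ∂ν := by
        gcongr; exact ENNReal.inv_mul_le_one _
    _ = (μ univ)⁻¹ * ∫⁻ a, ‖f a‖ₑ ^ 2 ∂μ := by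
        rw [one_mul, lintegral_smul_measure, smul_eq_mul]

variable [CompleteSpace E] {μ : Measure α} [IsFiniteMeasure μ] [NeZero μ] {f : α → E}

theorem average_sub_const (hf : Integrable f μ) (c : E) :
    ⨍ a, (f a - c) ∂μ = ⨍ a, f a ∂μ - c := by
  rw [average_eq, average_eq, integral_sub hf (integrable_const c), integral_const, smul_sub,
    inv_smul_smul₀ measureReal_univ_ne_zero]

theorem average_const_sub (hf : Integrable f μ) (c : E) :
    ⨍ a, (c - f a) ∂μ = c - ⨍ a, f a ∂μ := by
  calc ⨍ a, (c - f a) ∂μ = ⨍ a, -(f a - c) ∂μ := by simp only [neg_sub]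
    _ = c - ⨍ a, f a ∂μ := by rw [average_neg, average_sub_const hf, neg_sub]

theorem enorm_average_sub_average_sq_le {ν : Measure α} [IsFiniteMeasure ν] [NeZero ν]
    (hfμ : Integrable f μ) (hfν : Integrable f ν) :
    ‖⨍ x, f x ∂μ - ⨍ y, f y ∂ν‖ₑ ^ 2 ≤
      (μ univ)⁻¹ * (ν univ)⁻¹ * ∫⁻ x, ∫⁻ y, ‖f x - f y‖ₑ ^ 2 ∂ν ∂μ := by
  have hν : ∀ x, ‖f x - ⨍ y, f y ∂ν‖ₑ ^ 2 ≤ (ν univ)⁻¹ * ∫⁻ y, ‖f x - f y‖ₑ ^ 2 ∂ν := by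
    intro x
    rw [← average_const_sub hfν]
    exact enorm_average_sq_le ν (aestronglyMeasurable_const.sub hfν.1)
  calc ‖⨍ x, f x ∂μ - ⨍ y, f y ∂ν‖ₑ ^ 2
      ≤ (μ univ)⁻¹ * ∫⁻ x, ‖f x - ⨍ y, f y ∂ν‖ₑ ^ 2 ∂μ := by
        rw [← average_sub_const hfμ]
        exact enorm_average_sq_le μ (hfμ.1.sub aestronglyMeasurable_const)
    _ ≤ (μ univ)⁻¹ * ∫⁻ x, (ν univ)⁻¹ * ∫⁻ y, ‖f x - f y‖ₑ ^ 2 ∂ν ∂μ := by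
        gcongr with x; exact hν x
    _ = (μ univ)⁻¹ * (ν univ)⁻¹ * ∫⁻ x, ∫⁻ y, ‖f x - f y‖ₑ ^ 2 ∂ν ∂μ := by
        rw [lintegral_const_mul' _ _ (ENNReal.inv_ne_top.mpr (NeZero.ne _)), mul_assoc]

end Averages

section Segment

variable {E F : Type*} [NormedAddCommGroup E] [NormedSpace ℝ E] [NormedAddCommGroup F]
  [NormedSpace ℝ F] [CompleteSpace F]

theorem enorm_sub_le_lintegral_deriv_of_differentiableAt {f : ℝ → F} {a b : ℝ} (hab : a ≤ b)
    (hf : ∀ t ∈ Icc a b, DifferentiableAt ℝ f t) :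
    ‖f b - f a‖ₑ ≤ ∫⁻ t in Ioc a b, ‖deriv f t‖ₑ := by
  by_cases hint : IntegrableOn (deriv f) (Ioc a b)
  · have hderiv : ∀ t ∈ uIcc a b, HasDerivAt f (deriv f t) t := by
      rw [uIcc_of_le hab]; exact fun t ht => (hf t ht).hasDerivAt
    rw [← intervalIntegral.integral_eq_sub_of_hasDerivAt hderiv
      ((intervalIntegrable_iff_integrableOn_Ioc_of_le hab).mpr hint),
      intervalIntegral.integral_of_le hab]
    exact enorm_integral_le_lintegral_enorm _
  · have hinfinite : ∫⁻ t in Ioc a b, ‖deriv f t‖ₑ = ∞ :=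
      not_lt_top_iff.mp fun h => hint ⟨aestronglyMeasurable_deriv f _, h⟩
    exact hinfinite ▸ le_top

theorem enorm_sub_sq_le_lintegral_fderiv_segment {v : E → F} (hv : Differentiable ℝ v) (x y : E) :
    ‖v x - v y‖ₑ ^ 2 ≤
      ‖x - y‖ₑ ^ 2 * ∫⁻ t in Ioc (0 : ℝ) 1, ‖fderiv ℝ v ((1 - t) • y + t • x)‖ₑ ^ 2 := by
  set φ : ℝ → F := fun t => v ((1 - t) • y + t • x)
  have hφ : ∀ t, HasDerivAt φ (fderiv ℝ v ((1 - t) • y + t • x) (x - y)) t := by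
    intro t
    have hγ : HasDerivAt (fun t : ℝ => (1 - t) • y + t • x) (x - y) t := by
      convert AffineMap.hasDerivAt_lineMap (a := y) (b := x) (x := t) using 1
      exact funext fun s => (AffineMap.lineMap_apply_module y x s).symm
    exact (hv _).hasFDerivAt.comp_hasDerivAt t hγ
  calc ‖v x - v y‖ₑ ^ 2 = ‖φ 1 - φ 0‖ₑ ^ 2 := by simp [φ]
    _ ≤ (∫⁻ t in Ioc (0 : ℝ) 1, ‖deriv φ t‖ₑ) ^ 2 := by
        gcongr
        exact enorm_sub_le_lintegral_deriv_of_differentiableAt zero_le_one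
          fun t _ => (hφ t).differentiableAt
    _ ≤ volume (Ioc (0 : ℝ) 1) * ∫⁻ t in Ioc (0 : ℝ) 1, ‖deriv φ t‖ₑ ^ 2 := by
        simpa using sq_lintegral_le_measure_univ_mul (volume.restrict (Ioc (0 : ℝ) 1))
          (aestronglyMeasurable_deriv φ _).enorm
    _ ≤ ∫⁻ t in Ioc (0 : ℝ) 1, ‖x - y‖ₑ ^ 2 * ‖fderiv ℝ v ((1 - t) • y + t • x)‖ₑ ^ 2 := by
        rw [Real.volume_Ioc, sub_zero, ENNReal.ofReal_one, one_mul]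
        gcongr with t
        rw [(hφ t).deriv, ← mul_pow, mul_comm]
        gcongr
        exact ContinuousLinearMap.le_opENorm _ _
    _ = ‖x - y‖ₑ ^ 2 * ∫⁻ t in Ioc (0 : ℝ) 1, ‖fderiv ℝ v ((1 - t) • y + t • x)‖ₑ ^ 2 :=
        lintegral_const_mul' _ _ (by finiteness)

end Segment

section Haar

variable {E : Type*} [NormedAddCommGroup E] [NormedSpace ℝ E] [MeasurableSpace E] [BorelSpace E]
  [FiniteDimensional ℝ E] {μ : Measure E} [μ.IsAddHaarMeasure] {g : E → ℝ≥0∞} {D D₁ D₂ : Set E}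

theorem lintegral_comp_smul_add (hg : Measurable g) {c : ℝ} (hc : c ≠ 0) (b : E) :
    ∫⁻ y, g (c • y + b) ∂μ = ENNReal.ofReal |(c ^ finrank ℝ E)⁻¹| * ∫⁻ z, g z ∂μ := by
  calc ∫⁻ y, g (c • y + b) ∂μ = ∫⁻ z, g (z + b) ∂(μ.map (c • ·)) :=
        (lintegral_map (hg.comp (measurable_add_const b)) (measurable_const_smul c)).symm
    _ = ENNReal.ofReal |(c ^ finrank ℝ E)⁻¹| * ∫⁻ z, g z ∂μ := by
        rw [Measure.map_addHaar_smul μ hc, lintegral_smul_measure, smul_eq_mul,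
          lintegral_add_right_eq_self g b]

theorem setLIntegral_comp_smul_add_le (hg : Measurable g) (hD : MeasurableSet D) {A : Set E}
    {c : ℝ} (hc : 2⁻¹ ≤ c) {b : E} (hAD : MapsTo (fun y => c • y + b) A D) :
    ∫⁻ y in A, g (c • y + b) ∂μ ≤ 2 ^ finrank ℝ E * ∫⁻ z in D, g z ∂μ := by
  have hc₀ : 0 < c := lt_of_lt_of_le (by norm_num) hc
  have hscale : ENNReal.ofReal |(c ^ finrank ℝ E)⁻¹| ≤ 2 ^ finrank ℝ E := by
    rw [abs_of_pos (by positivity), ← inv_pow, ENNReal.ofReal_pow (by positivity)]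
    gcongr
    exact ENNReal.ofReal_le_of_le_toReal (by simpa using inv_le_of_inv_le₀ (by norm_num) hc)
  calc ∫⁻ y in A, g (c • y + b) ∂μ ≤ ∫⁻ y, D.indicator g (c • y + b) ∂μ :=
        (setLIntegral_mono ((hg.indicator hD).comp (by fun_prop)) fun y hy =>
          (indicator_of_mem (hAD hy) g).symm.le).trans (setLIntegral_le_lintegral _ _)
    _ = ENNReal.ofReal |(c ^ finrank ℝ E)⁻¹| * ∫⁻ z in D, g z ∂μ := by
        rw [lintegral_comp_smul_add (hg.indicator hD) hc₀.ne', lintegral_indicator hD]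
    _ ≤ 2 ^ finrank ℝ E * ∫⁻ z in D, g z ∂μ := by gcongr

theorem setLIntegral_setLIntegral_comp_convexCombination_le (hg : Measurable g)
    (hconv : Convex ℝ D) (hD : MeasurableSet D) (hD₁ : D₁ ⊆ D) (hD₂ : D₂ ⊆ D) {t : ℝ}
    (ht₀ : 0 ≤ t) (ht₁ : t ≤ 1) :
    ∫⁻ x in D₁, ∫⁻ y in D₂, g ((1 - t) • y + t • x) ∂μ ∂μ ≤
      2 ^ finrank ℝ E * μ D * ∫⁻ z in D, g z ∂μ := by
  set J := ∫⁻ z in D, g z ∂μ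
  have hconst : ∀ {s : Set E} {f : E → ℝ≥0∞}, s ⊆ D → (∀ x ∈ s, f x ≤ 2 ^ finrank ℝ E * J) →
      ∫⁻ x in s, f x ∂μ ≤ 2 ^ finrank ℝ E * μ D * J := by
    intro s f hs hf
    calc ∫⁻ x in s, f x ∂μ ≤ 2 ^ finrank ℝ E * J * μ s :=
          (setLIntegral_mono measurable_const hf).trans_eq (setLIntegral_const _ _)
      _ ≤ 2 ^ finrank ℝ E * μ D * J := by rw [mul_right_comm]; gcongr
  rcases le_total t 2⁻¹ with ht | ht
  · refine hconst hD₁ fun x hx => setLIntegral_comp_smul_add_le hg hD (by linarith) ?_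
    exact fun y hy => hconv (hD₂ hy) (hD₁ hx) (by linarith) ht₀ (by ring)
  · have hmeas : Measurable fun p : E × E => g ((1 - t) • p.2 + t • p.1) :=
      hg.comp (by fun_prop)
    rw [lintegral_lintegral_swap hmeas.aemeasurable]
    refine hconst hD₂ fun y hy => ?_
    simp_rw [add_comm ((1 - t) • y)]
    refine setLIntegral_comp_smul_add_le hg hD ht fun x hx => ?_
    simpa only [add_comm] using hconv (hD₂ hy) (hD₁ hx) (by linarith) ht₀ (by ring)

theorem setLIntegral_setLIntegral_lintegral_segment_le (hg : Measurable g) (hconv : Convex ℝ D)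
    (hD : MeasurableSet D) (hD₁ : D₁ ⊆ D) (hD₂ : D₂ ⊆ D) :
    ∫⁻ x in D₁, ∫⁻ y in D₂, (∫⁻ t in Ioc (0 : ℝ) 1, g ((1 - t) • y + t • x)) ∂μ ∂μ ≤
      2 ^ finrank ℝ E * μ D * ∫⁻ z in D, g z ∂μ := by
  have hmeas : Measurable fun p : (E × ℝ) × E => g ((1 - p.1.2) • p.2 + p.1.2 • p.1.1) :=
    hg.comp (by fun_prop)
  calc ∫⁻ x in D₁, ∫⁻ y in D₂, (∫⁻ t in Ioc (0 : ℝ) 1, g ((1 - t) • y + t • x)) ∂μ ∂μ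
      = ∫⁻ x in D₁, (∫⁻ t in Ioc (0 : ℝ) 1, ∫⁻ y in D₂, g ((1 - t) • y + t • x) ∂μ) ∂μ := by
        refine lintegral_congr fun x => lintegral_lintegral_swap ?_
        exact (hmeas.comp (by fun_prop : Measurable fun p : E × ℝ => ((x, p.2), p.1)))
          |>.aemeasurable
    _ = ∫⁻ t in Ioc (0 : ℝ) 1, ∫⁻ x in D₁, ∫⁻ y in D₂, g ((1 - t) • y + t • x) ∂μ ∂μ := by
        refine lintegral_lintegral_swap ?_
        exact hmeas.lintegral_prod_right'.aemeasurable
    _ ≤ ∫⁻ _ in Ioc (0 : ℝ) 1, 2 ^ finrank ℝ E * μ D * ∫⁻ z in D, g z ∂μ :=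
        setLIntegral_mono measurable_const fun t ht =>
          setLIntegral_setLIntegral_comp_convexCombination_le hg hconv hD hD₁ hD₂ ht.1.le ht.2
    _ = 2 ^ finrank ℝ E * μ D * ∫⁻ z in D, g z ∂μ := by simp

theorem measure_le_ofReal_diam_pow_mul (hbdd : Bornology.IsBounded D) :
    μ D ≤ ENNReal.ofReal (diam D ^ finrank ℝ E) * μ (ball 0 1) := by
  rcases D.eq_empty_or_nonempty with rfl | ⟨a, ha⟩
  · simp
  calc μ D ≤ μ (closedBall a (diam D)) :=
        measure_mono fun z hz => mem_closedBall.2 (dist_le_diam_of_mem hbdd hz ha)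
    _ = ENNReal.ofReal (diam D ^ finrank ℝ E) * μ (ball 0 1) :=
        μ.addHaar_closedBall a diam_nonneg

variable {F : Type*} [NormedAddCommGroup F] [NormedSpace ℝ F] [CompleteSpace F] {v : E → F}

theorem setLIntegral_setLIntegral_enorm_sub_sq_le (hconv : Convex ℝ D) (hD : MeasurableSet D)
    (hbdd : Bornology.IsBounded D) (hD₁ : D₁ ⊆ D) (hD₂ : D₂ ⊆ D) (hD₁m : MeasurableSet D₁)
    (hD₂m : MeasurableSet D₂) (hv : Differentiable ℝ v) :
    ∫⁻ x in D₁, ∫⁻ y in D₂, ‖v x - v y‖ₑ ^ 2 ∂μ ∂μ ≤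
      ENNReal.ofReal (diam D) ^ 2 *
        (2 ^ finrank ℝ E * μ D * ∫⁻ z in D, ‖fderiv ℝ v z‖ₑ ^ 2 ∂μ) := by
  calc ∫⁻ x in D₁, ∫⁻ y in D₂, ‖v x - v y‖ₑ ^ 2 ∂μ ∂μ
      ≤ ∫⁻ x in D₁, ∫⁻ y in D₂, ENNReal.ofReal (diam D) ^ 2 *
          (∫⁻ t in Ioc (0 : ℝ) 1, ‖fderiv ℝ v ((1 - t) • y + t • x)‖ₑ ^ 2) ∂μ ∂μ := by
        refine setLIntegral_mono' hD₁m fun x hx => setLIntegral_mono' hD₂m fun y hy => ?_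
        refine (enorm_sub_sq_le_lintegral_fderiv_segment hv x y).trans ?_
        gcongr
        rw [← edist_eq_enorm_sub, edist_dist]
        exact ENNReal.ofReal_le_ofReal (dist_le_diam_of_mem hbdd (hD₁ hx) (hD₂ hy))
    _ ≤ ENNReal.ofReal (diam D) ^ 2 *
        (2 ^ finrank ℝ E * μ D * ∫⁻ z in D, ‖fderiv ℝ v z‖ₑ ^ 2 ∂μ) := by
        simp_rw [lintegral_const_mul' _ _ (by finiteness : ENNReal.ofReal (diam D) ^ 2 ≠ ∞)]
        gcongr
        exact setLIntegral_setLIntegral_lintegral_segment_le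
          ((measurable_fderiv ℝ v).enorm.pow_const 2) hconv hD hD₁ hD₂

theorem enorm_setAverage_sub_setAverage_sq_le (hconv : Convex ℝ D) (hD : MeasurableSet D)
    (hbdd : Bornology.IsBounded D) (hD₁ : D₁ ⊆ D) (hD₂ : D₂ ⊆ D) (hD₁m : MeasurableSet D₁)
    (hD₂m : MeasurableSet D₂) (hμD₁ : μ D₁ ≠ 0) (hμD₂ : μ D₂ ≠ 0) (hv : Differentiable ℝ v) :
    ‖⨍ x in D₁, v x ∂μ - ⨍ x in D₂, v x ∂μ‖ₑ ^ 2 ≤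
      2 ^ finrank ℝ E * μ (ball 0 1) * ENNReal.ofReal (diam D) ^ (finrank ℝ E + 2) /
        (μ D₁ * μ D₂) * ∫⁻ z in D, ‖fderiv ℝ v z‖ₑ ^ 2 ∂μ := by
  have hfin : ∀ {s}, s ⊆ D → IsFiniteMeasure (μ.restrict s) := fun hs =>
    isFiniteMeasure_restrict.mpr ((measure_mono hs).trans_lt hbdd.measure_lt_top).ne
  have hint : ∀ {s}, s ⊆ D → IntegrableOn v s μ := fun hs =>
    (hv.continuous.continuousOn.integrableOn_compact hbdd.isCompact_closure).mono_set
      (hs.trans subset_closure)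
  have := hfin hD₁
  have := hfin hD₂
  have : NeZero (μ.restrict D₁) := ⟨by rwa [Ne, Measure.restrict_eq_zero]⟩
  have : NeZero (μ.restrict D₂) := ⟨by rwa [Ne, Measure.restrict_eq_zero]⟩
  calc ‖⨍ x in D₁, v x ∂μ - ⨍ x in D₂, v x ∂μ‖ₑ ^ 2
      ≤ (μ D₁)⁻¹ * (μ D₂)⁻¹ * ∫⁻ x in D₁, ∫⁻ y in D₂, ‖v x - v y‖ₑ ^ 2 ∂μ ∂μ := by
        simpa only [Measure.restrict_apply_univ] using
          enorm_average_sub_average_sq_le (hint hD₁) (hint hD₂)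
    _ ≤ (μ D₁)⁻¹ * (μ D₂)⁻¹ * (ENNReal.ofReal (diam D) ^ 2 * (2 ^ finrank ℝ E *
          (ENNReal.ofReal (diam D ^ finrank ℝ E) * μ (ball 0 1)) *
          ∫⁻ z in D, ‖fderiv ℝ v z‖ₑ ^ 2 ∂μ)) := by
        gcongr
        refine (setLIntegral_setLIntegral_enorm_sub_sq_le hconv hD hbdd hD₁ hD₂ hD₁m hD₂m
          hv).trans ?_
        gcongr
        exact measure_le_ofReal_diam_pow_mul hbdd
    _ = 2 ^ finrank ℝ E * μ (ball 0 1) * ENNReal.ofReal (diam D) ^ (finrank ℝ E + 2) /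
        (μ D₁ * μ D₂) * ∫⁻ z in D, ‖fderiv ℝ v z‖ₑ ^ 2 ∂μ := by
        rw [ENNReal.ofReal_pow diam_nonneg, div_eq_mul_inv,
          ENNReal.mul_inv (.inl hμD₁) (.inr hμD₂)]
        ring

end Haar

/-- Let `D ⊂ ℝⁿ` be a bounded convex domain and `D₁, D₂ ⊆ D` measurable
subsets of positive Lebesgue measure. There is a constant `C = C(n)` such that for every
`v ∈ H¹(D)`:
`|⟨v⟩_{D₁} − ⟨v⟩_{D₂}|² ≤ C (diam D)^{n+2} / (vol(D₁)·vol(D₂)) · ‖∇v‖²_{L²(D)}`. -/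
theorem mean_value_difference_convex
    (n : ℕ) :
    ∃ C : ℝ, 0 < C ∧
      ∀ (D D₁ D₂ : Set (EuclideanSpace ℝ (Fin n)))
        (v : EuclideanSpace ℝ (Fin n) → ℝ),
        Convex ℝ D → IsOpen D → Bornology.IsBounded D → D.Nonempty →
        D₁ ⊆ D → D₂ ⊆ D →
        MeasurableSet D₁ → MeasurableSet D₂ →
        0 < volume D₁ → 0 < volume D₂ →
        Differentiable ℝ v →
        MemLp v 2 (volume.restrict D) →
        MemLp (fun x => fderiv ℝ v x) 2 (volume.restrict D) →
        ((⨍ x in D₁, v x) - ⨍ x in D₂, v x) ^ 2 ≤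
          C * Metric.diam D ^ (n + 2) / ((volume D₁).toReal * (volume D₂).toReal) *
            ∫ x in D, ‖fderiv ℝ v x‖ ^ 2 := by
  set B := volume (ball (0 : EuclideanSpace ℝ (Fin n)) 1)
  have hB : 0 < B.toReal :=
    ENNReal.toReal_pos (measure_ball_pos volume 0 one_pos).ne' measure_ball_lt_top.ne
  refine ⟨2 ^ n * B.toReal, by positivity, ?_⟩
  intro D D₁ D₂ v hconv hopen hbdd _ hD₁ hD₂ hD₁m hD₂m hμD₁ hμD₂ hv _ hdv
  have hJ : ∫⁻ z in D, ‖fderiv ℝ v z‖ₑ ^ 2 = ENNReal.ofReal (∫ z in D, ‖fderiv ℝ v z‖ ^ 2) := by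
    rw [ofReal_integral_eq_lintegral_ofReal (hdv.integrable_norm_pow two_ne_zero)
      (ae_of_all _ fun _ => sq_nonneg _)]
    simp_rw [ENNReal.ofReal_pow (norm_nonneg _), ofReal_norm]
  have key := enorm_setAverage_sub_setAverage_sq_le hconv hopen.measurableSet hbdd hD₁ hD₂
    hD₁m hD₂m hμD₁.ne' hμD₂.ne' hv
  rw [hJ, finrank_euclideanSpace_fin] at key
  have hfinite : 2 ^ n * B * ENNReal.ofReal (diam D) ^ (n + 2) / (volume D₁ * volume D₂) *
      ENNReal.ofReal (∫ z in D, ‖fderiv ℝ v z‖ ^ 2) ≠ ∞ :=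
    ENNReal.mul_ne_top (ENNReal.div_ne_top (by finiteness) (mul_ne_zero hμD₁.ne' hμD₂.ne'))
      ENNReal.ofReal_ne_top
  simpa [ENNReal.toReal_mul, ENNReal.toReal_div, ENNReal.toReal_pow, toReal_enorm,
    ENNReal.toReal_ofReal diam_nonneg,
    ENNReal.toReal_ofReal (integral_nonneg fun _ => sq_nonneg _)]
    using ENNReal.toReal_mono hfinite key
end
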